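/- In an implicative algebra, if t is a pure closed λ-term (no parameters), then its encoding t^A belongs to the separator Σ. -/

import Mathlib

universe u v

/-- An implicative algebra: a complete lattice with an implication antitone in the
first argument, monotone in the second, distributing over arbitrary meets in the
second argument, together with a separator `Sep` which is upward closed, closed
under modus ponens, and contains the combinators K and S. -/
structure ImplicativeAlgebra (A : Type u) [CompleteLattice A] where
  imp : A → A → A
  imp_anti : ∀ ⦃a a' b : A⦄, a ≤ a' → imp a' b ≤ imp a b
  imp_mono : ∀ ⦃a b b' : A⦄, b ≤ b' → imp a b ≤ imp a b'
  imp_sInf : ∀ (a : A) (S : Set A), imp a (sInf S) = ⨅ b ∈ S, imp a b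
  Sep : Set A
  sep_upward : ∀ ⦃a b : A⦄, a ∈ Sep → a ≤ b → b ∈ Sep
  sep_mp : ∀ ⦃a b : A⦄, imp a b ∈ Sep → a ∈ Sep → b ∈ Sep
  sep_K : (⨅ a : A, ⨅ b : A, imp a (imp b a)) ∈ Sep
  sep_S : (⨅ a : A, ⨅ b : A, ⨅ c : A,
      imp (imp a (imp b c)) (imp (imp a b) (imp a c))) ∈ Sep

namespace ImplicativeAlgebra

variable {A : Type u} [CompleteLattice A] (𝔸 : ImplicativeAlgebra A)

/-- Application: `a · b := ⋀ {x | a ≤ b → x}`. -/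
def app (a b : A) : A := sInf {x : A | a ≤ 𝔸.imp b x}

/-- Implicative conjunction `a × b`. -/
def itimes (a b : A) : A := ⨅ x : A, 𝔸.imp (𝔸.imp a (𝔸.imp b x)) x

/-- Implicative disjunction `a + b`. -/
def iplus (a b : A) : A := ⨅ x : A, 𝔸.imp (𝔸.imp a x) (𝔸.imp (𝔸.imp b x) x)

/-- Second-order encoding of the existential quantifier. -/
def iexists {ι : Sort v} (f : ι → A) : A := ⨅ x : A, 𝔸.imp (⨅ i, 𝔸.imp (f i) x) x

/-- Encoding of k = λx.λy.x. -/
def kComb : A := ⨅ a : A, 𝔸.imp a (⨅ b : A, 𝔸.imp b a)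

/-- Encoding of λx.λy.y. -/
def kbarComb : A := ⨅ a : A, 𝔸.imp a (⨅ b : A, 𝔸.imp b b)

/-- Encoding of the pairing combinator p = λx.λy.λz.zxy. -/
def pComb : A := ⨅ a : A, 𝔸.imp a (⨅ b : A, 𝔸.imp b (⨅ c : A, 𝔸.imp c (𝔸.app (𝔸.app c a) b)))

/-- Encoding of the first projection p₁ = λu.u k. -/
def p1Comb : A := ⨅ u : A, 𝔸.imp u (𝔸.app u 𝔸.kComb)

/-- Encoding of the second projection p₂ = λv.v k̄. -/
def p2Comb : A := ⨅ u : A, 𝔸.imp u (𝔸.app u 𝔸.kbarComb)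

/-- Encoding of the existential-introduction combinator e = λx.λz.zx. -/
def eComb : A := ⨅ a : A, 𝔸.imp a (⨅ c : A, 𝔸.imp c (𝔸.app c a))

end ImplicativeAlgebra

/-- λ-terms with constant parameters in `A` (de Bruijn indices). -/
inductive Term (A : Type u) : Type u
  | var : ℕ → Term A
  | param : A → Term A
  | app : Term A → Term A → Term A
  | lam : Term A → Term A

/-- Extend an environment with a new value for the variable `0`. -/
def consEnv {A : Type u} (a : A) (ρ : ℕ → A) : ℕ → A
  | 0 => a
  | n + 1 => ρ n

/-- The encoding of λ-terms with parameters in `A` as elements of `A`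
(relative to an environment interpreting the free variables). -/
def Term.eval {A : Type u} [CompleteLattice A] (𝔸 : ImplicativeAlgebra A) :
    Term A → (ℕ → A) → A
  | .var n, ρ => ρ n
  | .param a, _ => a
  | .app t s, ρ => 𝔸.app (Term.eval 𝔸 t ρ) (Term.eval 𝔸 s ρ)
  | .lam t, ρ => ⨅ a : A, 𝔸.imp a (Term.eval 𝔸 t (consEnv a ρ))

/-- A λ-term is pure (contains no parameters) with all free variables among the
first `n` de Bruijn indices. -/
inductive Term.PureUnder {A : Type u} : ℕ → Term A → Prop
  | var {n i : ℕ} : i < n → Term.PureUnder n (.var i)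
  | app {n : ℕ} {t s : Term A} :
      Term.PureUnder n t → Term.PureUnder n s → Term.PureUnder n (.app t s)
  | lam {n : ℕ} {t : Term A} : Term.PureUnder (n + 1) t → Term.PureUnder n (.lam t)

/-!
Bracket abstraction translates a pure λ-term into a combinatory term over `K` and `S`.
Since `a · b ≤ x ↔ a ≤ b → x`, the encodings of `K` and `S` satisfy their reduction rules as
inequalities, hence so does the abstraction: `(λ*x. e) · a ≤ e[x := a]`. By induction the
value of the translation lies below the encoding of the λ-term. A closed combinatory term is
built from `K, S ∈ Σ` by application, and `Σ` is closed under application by modus ponens;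
upward closure of `Σ` then gives the theorem.
-/

namespace ImplicativeAlgebra

variable {A : Type u} [CompleteLattice A] (𝔸 : ImplicativeAlgebra A)

-- `K` and `S` in the form of the axioms `sep_K` and `sep_S`, which differs from `kComb`.
def combK : A := ⨅ a : A, ⨅ b : A, 𝔸.imp a (𝔸.imp b a)

def combS : A := ⨅ a : A, ⨅ b : A, ⨅ c : A,
    𝔸.imp (𝔸.imp a (𝔸.imp b c)) (𝔸.imp (𝔸.imp a b) (𝔸.imp a c))

theorem le_imp_app (a b : A) : a ≤ 𝔸.imp b (𝔸.app a b) := by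
  rw [app, 𝔸.imp_sInf]
  exact le_iInf₂ fun _ hx => hx

theorem app_le_iff {a b x : A} : 𝔸.app a b ≤ x ↔ a ≤ 𝔸.imp b x :=
  ⟨fun h => (𝔸.le_imp_app a b).trans (𝔸.imp_mono h), fun h => sInf_le h⟩

theorem app_mono {a a' b b' : A} (ha : a ≤ a') (hb : b ≤ b') : 𝔸.app a b ≤ 𝔸.app a' b' :=
  𝔸.app_le_iff.2 <| ha.trans <| (𝔸.le_imp_app a' b').trans (𝔸.imp_anti hb)

theorem app_mem_sep {a b : A} (ha : a ∈ 𝔸.Sep) (hb : b ∈ 𝔸.Sep) : 𝔸.app a b ∈ 𝔸.Sep :=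
  𝔸.sep_mp (𝔸.sep_upward ha (𝔸.le_imp_app a b)) hb

theorem app_app_combK_le (a b : A) : 𝔸.app (𝔸.app 𝔸.combK a) b ≤ a := by
  simp only [app_le_iff]
  exact (iInf_le _ a).trans (iInf_le _ b)

theorem app_app_app_combS_le (f g x : A) :
    𝔸.app (𝔸.app (𝔸.app 𝔸.combS f) g) x ≤ 𝔸.app (𝔸.app f x) (𝔸.app g x) := by
  simp only [app_le_iff]
  calc 𝔸.combS
      ≤ 𝔸.imp (𝔸.imp x (𝔸.imp (𝔸.app g x) (𝔸.app (𝔸.app f x) (𝔸.app g x))))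
          (𝔸.imp (𝔸.imp x (𝔸.app g x)) (𝔸.imp x (𝔸.app (𝔸.app f x) (𝔸.app g x)))) :=
        (iInf_le _ x).trans <| (iInf_le _ _).trans (iInf_le _ _)
    _ ≤ 𝔸.imp f (𝔸.imp g (𝔸.imp x (𝔸.app (𝔸.app f x) (𝔸.app g x)))) :=
        (𝔸.imp_anti <| (𝔸.le_imp_app f x).trans <| 𝔸.imp_mono <| 𝔸.le_imp_app _ _).trans <|
          𝔸.imp_mono <| 𝔸.imp_anti <| 𝔸.le_imp_app g x

end ImplicativeAlgebra

inductive SKTerm (A : Type u) : Type u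
  | var : ℕ → SKTerm A
  | param : A → SKTerm A
  | K : SKTerm A
  | S : SKTerm A
  | app : SKTerm A → SKTerm A → SKTerm A

namespace SKTerm

variable {A : Type u}

def eval [CompleteLattice A] (𝔸 : ImplicativeAlgebra A) : SKTerm A → (ℕ → A) → A
  | var n, ρ => ρ n
  | param a, _ => a
  | K, _ => 𝔸.combK
  | S, _ => 𝔸.combS
  | app e f, ρ => 𝔸.app (eval 𝔸 e ρ) (eval 𝔸 f ρ)

/-- Bracket abstraction of the variable `0`; the other indices are lowered by one. -/
def abstract : SKTerm A → SKTerm A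
  | var 0 => app (app S K) K
  | var (i + 1) => app K (var i)
  | param a => app K (param a)
  | K => app K K
  | S => app K S
  | app e f => app (app S (abstract e)) (abstract f)

inductive PureUnder : ℕ → SKTerm A → Prop
  | var {n i : ℕ} : i < n → PureUnder n (var i)
  | K {n : ℕ} : PureUnder n K
  | S {n : ℕ} : PureUnder n S
  | app {n : ℕ} {e f : SKTerm A} : PureUnder n e → PureUnder n f → PureUnder n (app e f)

theorem PureUnder.abstract {n : ℕ} : ∀ {e : SKTerm A}, PureUnder (n + 1) e →
    PureUnder n e.abstract
  | .var 0, _ => .app (.app .S .K) .K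
  | .var (_ + 1), .var h => .app .K (.var (Nat.lt_of_succ_lt_succ h))
  | .K, _ => .app .K .K
  | .S, _ => .app .K .S
  | .app _ _, .app he hf => .app (.app .S he.abstract) hf.abstract

variable [CompleteLattice A] (𝔸 : ImplicativeAlgebra A)

theorem PureUnder.eval_mem_sep {e : SKTerm A} (he : PureUnder 0 e) (ρ : ℕ → A) :
    e.eval 𝔸 ρ ∈ 𝔸.Sep := by
  induction he with
  | var h => exact absurd h (Nat.not_lt_zero _)
  | K => exact 𝔸.sep_K
  | S => exact 𝔸.sep_S
  | app _ _ ihe ihf => exact 𝔸.app_mem_sep ihe ihf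

theorem app_eval_abstract_le (e : SKTerm A) (ρ : ℕ → A) (a : A) :
    𝔸.app (e.abstract.eval 𝔸 ρ) a ≤ e.eval 𝔸 (consEnv a ρ) := by
  induction e with
  | var i =>
    cases i with
    | zero => exact (𝔸.app_app_app_combS_le _ _ a).trans (𝔸.app_app_combK_le a _)
    | succ i => exact 𝔸.app_app_combK_le (ρ i) a
  | param b => exact 𝔸.app_app_combK_le b a
  | K => exact 𝔸.app_app_combK_le _ a
  | S => exact 𝔸.app_app_combK_le _ a
  | app e f ihe ihf => exact (𝔸.app_app_app_combS_le _ _ a).trans (𝔸.app_mono ihe ihf)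

end SKTerm

namespace Term

variable {A : Type u}

def toSK : Term A → SKTerm A
  | var i => .var i
  | param a => .param a
  | app t s => .app t.toSK s.toSK
  | lam t => t.toSK.abstract

theorem PureUnder.toSK {n : ℕ} {t : Term A} (ht : PureUnder n t) : t.toSK.PureUnder n := by
  induction ht with
  | var h => exact .var h
  | app _ _ iht ihs => exact .app iht ihs
  | lam _ iht => exact iht.abstract

theorem eval_toSK_le [CompleteLattice A] (𝔸 : ImplicativeAlgebra A) (t : Term A) (ρ : ℕ → A) :
    t.toSK.eval 𝔸 ρ ≤ t.eval 𝔸 ρ := by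
  induction t generalizing ρ with
  | var _ | param _ => exact le_rfl
  | app t s iht ihs => exact 𝔸.app_mono (iht ρ) (ihs ρ)
  | lam t iht =>
    refine le_iInf fun a => 𝔸.app_le_iff.1 ?_
    exact (t.toSK.app_eval_abstract_le 𝔸 ρ a).trans (iht _)

end Term

/-- if t is a pure closed λ-term (no parameters), then its
encoding t^A belongs to the separator Σ. -/
theorem pure_closed_mem_sep {A : Type u} [CompleteLattice A]
    (𝔸 : ImplicativeAlgebra A) (t : Term A) (ht : Term.PureUnder 0 t) (ρ : ℕ → A) :
    Term.eval 𝔸 t ρ ∈ 𝔸.Sep :=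
  𝔸.sep_upward (ht.toSK.eval_mem_sep 𝔸 ρ) (t.eval_toSK_le 𝔸 ρ)
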